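/- Let $\vartheta:[0,\bar r)\to\mathbb{R}_+$ be smooth with $\vartheta'>0$ on $(0,\bar r)$, and let $\bar g = dr^2+\vartheta^2\sigma$ on $[0,\bar r)\times\mathbb{S}^n$. Then the monotonicity hypothesis that $r\mapsto 2\vartheta''/\vartheta - (n-1)(1-\vartheta'^2)/\vartheta^2$ is non-decreasing is equivalent to the pointwise tensor inequality $\bar\Delta\vartheta'\,\bar g - \bar\nabla^2\vartheta' + \vartheta'\,\overline{\mathrm{Rc}} \ge 0$, since this tensor equals $\big(\vartheta^2\vartheta'''/\vartheta' + (n-2)\vartheta\vartheta'' + (n-1)(1-\vartheta'^2)\big)\sigma$. -/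

import Mathlib

open Set

/-- **Equivalence of the monotonicity hypothesis (H3) with the tensor
inequality `Δ̄θ' ḡ - ∇̄²θ' + θ' Rc̄ ≥ 0`.**
For the warped metric `ḡ = dr² + θ²σ` on `[0, r̄) × 𝕊ⁿ` the tensor
`Δ̄θ' ḡ - ∇̄²θ' + θ' Rc̄` equals
`(θ²θ'''/θ' + (n-2)θθ'' + (n-1)(1-θ'²)) σ`, so (with `θ, θ' > 0`) its
non-negativity is equivalent to the function
`2θ''/θ - (n-1)(1-θ'²)/θ²` being non-decreasing on `(0, r̄)`. -/
theorem monotone_iff_tensor_nonneg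
    (n : ℕ) (hn : 1 ≤ n) (rbar : ℝ) (hrbar : 0 < rbar)
    (θ : ℝ → ℝ) (hθ : ContDiff ℝ (⊤ : ℕ∞) θ)
    (hpos : ∀ r ∈ Ico 0 rbar, 0 < θ r)
    (hpos' : ∀ r ∈ Ioo 0 rbar, 0 < deriv θ r) :
    MonotoneOn
      (fun r => 2 * deriv (deriv θ) r / θ r
        - (n - 1) * (1 - (deriv θ r) ^ 2) / (θ r) ^ 2)
      (Ioo 0 rbar)
    ↔ ∀ r ∈ Ioo 0 rbar,
        0 ≤ (θ r) ^ 2 * iteratedDeriv 3 θ r / deriv θ r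
            + (n - 2) * θ r * deriv (deriv θ) r
            + (n - 1) * (1 - (deriv θ r) ^ 2) := by
  set F : ℝ → ℝ := fun r => 2 * deriv (deriv θ) r / θ r
        - (n - 1) * (1 - (deriv θ r) ^ 2) / (θ r) ^ 2 with hF
  set E : ℝ → ℝ := fun r => (θ r) ^ 2 * iteratedDeriv 3 θ r / deriv θ r
            + (n - 2) * θ r * deriv (deriv θ) r
            + (n - 1) * (1 - (deriv θ r) ^ 2) with hE
  -- smoothness of derivatives
  have hθ0 : ContDiff ℝ (⊤:ℕ∞) θ := hθ.of_le (by simp)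
  have hθ1 : ContDiff ℝ (⊤:ℕ∞) (deriv θ) := (contDiff_infty_iff_deriv.mp hθ0).2
  have hθ2 : ContDiff ℝ (⊤:ℕ∞) (deriv (deriv θ)) := (contDiff_infty_iff_deriv.mp hθ1).2
  have h3 : ∀ r, iteratedDeriv 3 θ r = deriv (deriv (deriv θ)) r := by
    intro r
    rw [show (3:ℕ) = 2 + 1 by rfl, iteratedDeriv_succ,
      show (2:ℕ) = 1 + 1 by rfl, iteratedDeriv_succ, iteratedDeriv_one]
  -- key derivative computation
  have key : ∀ r ∈ Ioo 0 rbar,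
      HasDerivAt F (2 * deriv θ r / (θ r) ^ 3 * E r) r := by
    intro r hr
    have ha : (0:ℝ) < θ r := hpos r ⟨le_of_lt hr.1, hr.2⟩
    have hb : (0:ℝ) < deriv θ r := hpos' r hr
    have d0 : HasDerivAt θ (deriv θ r) r :=
      (hθ0.differentiable (by simp) r).hasDerivAt
    have d1 : HasDerivAt (deriv θ) (deriv (deriv θ) r) r :=
      (hθ1.differentiable (by simp) r).hasDerivAt
    have d2 : HasDerivAt (deriv (deriv θ)) (iteratedDeriv 3 θ r) r := by
      rw [h3 r]; exact (hθ2.differentiable (by simp) r).hasDerivAt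
    have hA : HasDerivAt (fun r => 2 * deriv (deriv θ) r / θ r)
        ((2 * iteratedDeriv 3 θ r * θ r - 2 * deriv (deriv θ) r * deriv θ r)
          / (θ r) ^ 2) r :=
      ((d2.const_mul 2).div d0 (ne_of_gt ha))
    have hnum : HasDerivAt (fun r => ((n:ℝ) - 1) * (1 - (deriv θ r) ^ 2))
        (((n:ℝ) - 1) * (0 - 2 * deriv θ r ^ 1 * deriv (deriv θ) r)) r :=
      (((hasDerivAt_const r (1:ℝ)).sub (d1.pow 2)).const_mul _)
    have hden : HasDerivAt (fun r => (θ r) ^ 2) (2 * θ r ^ 1 * deriv θ r) r :=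
      d0.pow 2
    have hB := hnum.div hden (by positivity)
    have := hA.sub hB
    convert this using 1
    case e'_4 => rfl
    case e'_5 => rfl
    case e'_8 => rfl
    rw [hE]
    have hb' : deriv θ r ≠ 0 := ne_of_gt hb
    have ha' : θ r ≠ 0 := ne_of_gt ha
    field_simp
    ring
  constructor
  · intro hmono r hr
    have hd := key r hr
    have ha : (0:ℝ) < θ r := hpos r ⟨le_of_lt hr.1, hr.2⟩
    have hb : (0:ℝ) < deriv θ r := hpos' r hr
    -- the derivative is nonneg since F is monotone near r
    have hkey : 0 ≤ 2 * deriv θ r / (θ r) ^ 3 * E r := by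
      have hds : HasDerivWithinAt F (2 * deriv θ r / (θ r) ^ 3 * E r) (Ioi r) r :=
        hd.hasDerivWithinAt
      rw [hasDerivWithinAt_iff_tendsto_slope,
        show Ioi r \ {r} = Ioi r from Set.diff_singleton_eq_self (notMem_Ioi.mpr le_rfl)] at hds
      refine ge_of_tendsto hds ?_
      have hmem : Ioo (0:ℝ) rbar ∈ nhdsWithin r (Ioi r) :=
        nhdsWithin_le_nhds (isOpen_Ioo.mem_nhds hr)
      have hmem2 : Ioi r ∈ nhdsWithin r (Ioi r) := self_mem_nhdsWithin
      filter_upwards [hmem, hmem2] with y hy hy2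
      have hle : F r ≤ F y := hmono hr hy (le_of_lt hy2)
      rw [slope_def_field]
      exact div_nonneg (sub_nonneg.mpr hle) (sub_nonneg.mpr (le_of_lt hy2))
    have hk : (0:ℝ) < 2 * deriv θ r / (θ r) ^ 3 := by positivity
    exact nonneg_of_mul_nonneg_right hkey hk
  · intro hEpos
    have : interior (Ioo (0:ℝ) rbar) = Ioo 0 rbar := interior_Ioo
    refine monotoneOn_of_deriv_nonneg (convex_Ioo 0 rbar) ?_ ?_ ?_
    · intro r hr; exact ((key r hr).continuousAt).continuousWithinAt
    · rw [this]; intro r hr; exact ((key r hr).differentiableAt).differentiableWithinAt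
    · rw [this]; intro r hr
      rw [(key r hr).deriv]
      have ha : (0:ℝ) < θ r := hpos r ⟨le_of_lt hr.1, hr.2⟩
      have hb : (0:ℝ) < deriv θ r := hpos' r hr
      have := hEpos r hr
      positivity
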